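/- Let D be a unital C*-algebra and let E be a C*-subalgebra of D containing the unit of D, and suppose E is stably finite. Then B = {f ∈ C([0,1], D) : f(0) ∈ E} is a stably finite unital C*-algebra. (Applied with E the canonical unital copy of a stably finite unital C*-algebra B₀ inside a C*-tensor product A ⊗ B₀, this says that (CA)⁺ ⊗ B₀ is stably finite for every unital C*-algebra A.) -/

import Mathlib

/-- A unital *-ring is *finite* if `x* x = 1` implies `x x* = 1`. -/
def IsFiniteStarRing (D : Type*) [Ring D] [StarRing D] : Prop :=
  ∀ x : D, star x * x = 1 → x * star x = 1

/-- A unital *-ring is *stably finite* if every matrix algebra `Mₙ(D)` (`n ≥ 1`) is finite. -/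
def IsStablyFinite (D : Type*) [Ring D] [StarRing D] : Prop :=
  ∀ n : ℕ, 1 ≤ n → IsFiniteStarRing (Matrix (Fin n) (Fin n) D)

/-- For a unital C*-algebra `D` and a unital C*-subalgebra `E ⊆ D`, the unital C*-algebra
`B = {f ∈ C([0,1], D) : f(0) ∈ E}`, realized as a *-subalgebra of `C([0,1], D)`. -/
def valueAtZeroIn (D : Type*) [CStarAlgebra D] (E : StarSubalgebra ℂ D) :
    StarSubalgebra ℂ C(unitInterval, D) where
  carrier := {f | f 0 ∈ E}
  mul_mem' {f g} hf hg := by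
    simpa [Set.mem_setOf_eq] using mul_mem hf hg
  one_mem' := by
    simpa [Set.mem_setOf_eq] using one_mem E
  add_mem' {f g} hf hg := by
    simpa [Set.mem_setOf_eq] using add_mem hf hg
  zero_mem' := by
    simpa [Set.mem_setOf_eq] using zero_mem E
  algebraMap_mem' r := by
    simpa [Set.mem_setOf_eq, Algebra.algebraMap_eq_smul_one] using E.algebraMap_mem r
  star_mem' {f} hf := by
    simpa [Set.mem_setOf_eq] using star_mem hf

/-!
Let `x ∈ Mₙ(B)` with `x⋆ x = 1`. Evaluating at `t ∈ [0,1]` gives isometries `x(t) ∈ Mₙ(D)`, so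
`p(t) = x(t) x(t)⋆` is a continuous path of projections in the C⋆-algebra `Mₙ(D)`. Since
`x(0) ∈ Mₙ(E)` and `E` is stably finite, `p(0) = 1`. A projection at distance `< 1` from `1` equals
`1` (`1 - p` is a projection of norm `< 1`, hence `0`), so `{t | p(t) = 1}` is clopen, hence all of
the connected interval `[0,1]`, i.e. `x x⋆ = 1`.
-/

theorem IsStarProjection.eq_zero_of_norm_lt_one {A : Type*} [NonUnitalNormedRing A] [StarRing A]
    [CStarRing A] {e : A} (he : IsStarProjection e) (h : ‖e‖ < 1) : e = 0 := by
  have hsq : ‖e‖ * ‖e‖ = ‖e‖ := by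
    rw [← CStarRing.norm_star_mul_self, he.isSelfAdjoint.star_eq, he.isIdempotentElem.eq]
  have : ‖e‖ = 0 := by nlinarith [norm_nonneg e]
  exact norm_eq_zero.mp this

theorem isStarProjection_mul_star_of_star_mul_eq_one {R : Type*} [Monoid R] [StarMul R] {u : R}
    (hu : star u * u = 1) : IsStarProjection (u * star u) where
  isIdempotentElem := by rw [IsIdempotentElem, mul_assoc, ← mul_assoc (star u), hu, one_mul]
  isSelfAdjoint := by rw [IsSelfAdjoint, star_mul, star_star]

theorem eq_one_of_continuous_of_isStarProjection {X A : Type*} [TopologicalSpace X]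
    [PreconnectedSpace X] [NormedRing A] [StarRing A] [CStarRing A] {p : X → A}
    (hp : Continuous p) (hproj : ∀ x, IsStarProjection (p x)) {x₀ : X} (h₀ : p x₀ = 1) (x : X) :
    p x = 1 := by
  have hS : {x | p x = 1} = {x | ‖1 - p x‖ < 1} := by
    ext y
    refine ⟨fun hy => by simp [show p y = 1 from hy], fun hy => ?_⟩
    exact (sub_eq_zero.mp ((hproj y).one_sub.eq_zero_of_norm_lt_one hy)).symm
  have hclopen : IsClopen {x | p x = 1} :=
    ⟨isClosed_eq hp continuous_const, hS ▸ isOpen_lt (by fun_prop) continuous_const⟩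
  exact Set.eq_univ_iff_forall.mp (hclopen.eq_univ ⟨x₀, h₀⟩) x

theorem IsFiniteStarRing.map_mul_star_eq_one {R S F : Type*} [Ring R] [StarRing R] [Ring S]
    [StarRing S] [FunLike F R S] [RingHomClass F R S] [StarHomClass F R S] {f : F}
    (hf : Function.Injective f) (hR : IsFiniteStarRing R) {x : R}
    (hx : star (f x) * f x = 1) : f x * star (f x) = 1 := by
  rw [← map_star, ← map_mul, ← map_one f] at hx ⊢
  rw [hR x (hf hx)]

-- Mathlib's `ContinuousMap.evalStarAlgHom` requires a commutative codomain.
def ContinuousMap.evalStarAlgHom' (S : Type*) {X R : Type*} [TopologicalSpace X] [CommSemiring S]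
    [Semiring R] [Algebra S R] [TopologicalSpace R] [IsTopologicalSemiring R] [StarRing R]
    [ContinuousStar R] (x : X) : C(X, R) →⋆ₐ[S] R :=
  { (Pi.evalAlgHom S (fun _ => R) x).comp (ContinuousMap.coeFnAlgHom S) with
    map_star' := fun _ => rfl }

def StarAlgHom.mapMatrix {R A B m : Type*} [Fintype m] [DecidableEq m] [CommSemiring R]
    [Semiring A] [Algebra R A] [StarRing A] [Semiring B] [Algebra R B] [StarRing B]
    (f : A →⋆ₐ[R] B) : Matrix m m A →⋆ₐ[R] Matrix m m B :=
  { f.toAlgHom.mapMatrix with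
    map_star' := fun _ => Matrix.conjTranspose_map f (map_star f) }

namespace valueAtZeroIn

variable {D : Type*} [CStarAlgebra D] {E : StarSubalgebra ℂ D} {m : Type*} [Fintype m]
  [DecidableEq m]

variable (D E m) in
def evalMatrix (t : unitInterval) :
    Matrix m m (valueAtZeroIn D E) →⋆ₐ[ℂ] CStarMatrix m m D :=
  CStarMatrix.ofMatrixStarAlgEquiv.toStarAlgHom.comp
    ((ContinuousMap.evalStarAlgHom' ℂ t).comp (valueAtZeroIn D E).subtype).mapMatrix

theorem continuous_evalMatrix (x : Matrix m m (valueAtZeroIn D E)) :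
    Continuous fun t => evalMatrix D E m t x :=
  continuous_pi fun i => continuous_pi fun j => (x i j).1.continuous

theorem eq_of_forall_evalMatrix_eq {x y : Matrix m m (valueAtZeroIn D E)}
    (h : ∀ t, evalMatrix D E m t x = evalMatrix D E m t y) : x = y := by
  ext i j t
  exact congrFun (congrFun (h t) i) j

theorem isStarProjection_evalMatrix_mul_star {x : Matrix m m (valueAtZeroIn D E)}
    (hx : star x * x = 1) (t : unitInterval) :
    IsStarProjection (evalMatrix D E m t (x * star x)) := by
  rw [map_mul, map_star]
  refine isStarProjection_mul_star_of_star_mul_eq_one ?_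
  rw [← map_star, ← map_mul, hx, map_one]

theorem evalMatrix_zero_mul_star_eq_one (hE : IsFiniteStarRing (Matrix m m E))
    {x : Matrix m m (valueAtZeroIn D E)} (hx : star x * x = 1) :
    evalMatrix D E m 0 (x * star x) = 1 := by
  let ι : Matrix m m E →⋆ₐ[ℂ] CStarMatrix m m D :=
    CStarMatrix.ofMatrixStarAlgEquiv.toStarAlgHom.comp E.subtype.mapMatrix
  have hι : Function.Injective ι := Matrix.map_injective Subtype.val_injective
  have hx₀ : ι (x.map fun b => ⟨b.1 0, b.2⟩) = evalMatrix D E m 0 x := rfl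
  rw [map_mul, map_star, ← hx₀]
  refine hE.map_mul_star_eq_one hι ?_
  rw [hx₀, ← map_star, ← map_mul, hx, map_one]

theorem evalMatrix_mul_star_eq_one (hE : IsFiniteStarRing (Matrix m m E))
    {x : Matrix m m (valueAtZeroIn D E)} (hx : star x * x = 1) (t : unitInterval) :
    evalMatrix D E m t (x * star x) = 1 := by
  -- the C⋆-norm on `CStarMatrix` is only set up over a C⋆-algebra carrying its spectral order
  let _ := CStarAlgebra.spectralOrder D
  have _ := CStarAlgebra.spectralOrderedRing D
  exact eq_one_of_continuous_of_isStarProjection (continuous_evalMatrix (x * star x))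
    (isStarProjection_evalMatrix_mul_star hx) (evalMatrix_zero_mul_star_eq_one hE hx) t

end valueAtZeroIn

theorem stablyFinite_valueAtZeroIn_general (D : Type*) [CStarAlgebra D] (E : StarSubalgebra ℂ D)
    (hE : IsStablyFinite E) :
    IsStablyFinite (valueAtZeroIn D E) := by
  intro n hn x hx
  refine valueAtZeroIn.eq_of_forall_evalMatrix_eq fun t => ?_
  rw [map_one]
  exact valueAtZeroIn.evalMatrix_mul_star_eq_one (hE n hn) hx t

/-- Let `D` be a unital C*-algebra and let `E` be a (closed) C*-subalgebra of `D` containing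
the unit of `D`, and suppose `E` is stably finite.  Then
`B = {f ∈ C([0,1], D) : f(0) ∈ E}` is a stably finite unital C*-algebra. -/
theorem stablyFinite_valueAtZeroIn (D : Type*) [CStarAlgebra D] (E : StarSubalgebra ℂ D)
    (hEclosed : IsClosed (E : Set D)) (hE : IsStablyFinite E) :
    IsStablyFinite (valueAtZeroIn D E) :=
  stablyFinite_valueAtZeroIn_general D E hE
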